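/- Let $\{D_{n,i},\mathcal{F}_i : 1\le i\le n\}$, $n\ge 1$, be a martingale-difference array with a common filtration $(\mathcal{F}_i)$, $\mathcal{F}_0$ trivial. Define $M_{n,k}=\sum_{i=1}^k D_{n,i}$, $S_{n,k}=M_{n,k}$ for $k\le n$ and $S_{n,k}=M_{n,n}+\sum_{j=n+1}^k D_{j,j}$ for $k>n$, and $R_n=\sum_{j=1}^{n-1}(D_{n,j}-D_{n-1,j})$. Then for any non-increasing positive sequence $(c_n)$, $p\ge 1$, $\lambda>0$ and $n\le N$: $2^{-p}\lambda^p\,\mathbb{P}\big(\max_{n\le m\le N} c_m|M_{m,m}|>\lambda\big) \le c_N^p\,\mathbb{E}(|S_{n,N}|^p) + \sum_{j=n}^{N-1}(c_j^p-c_{j+1}^p)\,\mathbb{E}(|S_{n,j}|^p) + \mathbb{E}\big[\big(\sum_{j=n+1}^N c_j|R_j|\big)^p\big]$. -/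

import Mathlib

/-!
Along its second index, `k ↦ S_{n,k}` is the partial-sum process of the martingale differences
`D_{max n i, i}`, so it is a martingale and, by conditional Jensen, `|S_{n,k}|^p` is a nonnegative
submartingale. Since `M_{m,m} = S_{n,m} + ∑_{j=n+1}^m R_j` and `c` is non-increasing,
`c_m |M_{m,m}| > λ` forces `c_m |S_{n,m}| > λ/2` or `∑_{j=n+1}^N c_j |R_j| > λ/2`. The first
event is controlled by Chow's weighted maximal inequality for submartingales, which follows by
induction on `N`: the event up to time `N` is `ℱ_N`-measurable, so on it the submartingale property
trades `c_N X_N` for `c_{N+1} X_{N+1} + (c_N - c_{N+1}) X_N`. The second event is controlled by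
Markov's inequality.
-/

open MeasureTheory Finset

/-- Row-wise partial sums of a triangular array (1-indexed). -/
def arrM {Ω : Type*} (D : ℕ → ℕ → Ω → ℝ) (n k : ℕ) (ω : Ω) : ℝ :=
  ∑ i ∈ Finset.Icc 1 k, D n i ω

/-- The process `S_{n,k}` : equals `M_{n,k}` for `k ≤ n` and
`M_{n,n} + ∑_{j=n+1}^k D_{j,j}` for `k > n`. -/
def arrS {Ω : Type*} (D : ℕ → ℕ → Ω → ℝ) (n k : ℕ) (ω : Ω) : ℝ :=
  if k ≤ n then arrM D n k ω
  else arrM D n n ω + ∑ j ∈ Finset.Icc (n + 1) k, D j j ω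

/-- The row increment `R_n = ∑_{j=1}^{n-1} (D_{n,j} - D_{n-1,j})`. -/
def arrR {Ω : Type*} (D : ℕ → ℕ → Ω → ℝ) (n : ℕ) (ω : Ω) : ℝ :=
  ∑ j ∈ Finset.Icc 1 (n - 1), (D n j ω - D (n - 1) j ω)

section Martingale

variable {Ω E : Type*} {m0 : MeasurableSpace Ω} {μ : Measure Ω} {ℱ : Filtration ℕ m0}
  [NormedAddCommGroup E] [NormedSpace ℝ E] [CompleteSpace E]

theorem martingale_sum_Icc_of_condExp_eq_zero [IsFiniteMeasure μ] {d : ℕ → Ω → E}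
    (hadp : ∀ i, 1 ≤ i → StronglyMeasurable[ℱ i] (d i))
    (hint : ∀ i, 1 ≤ i → Integrable (d i) μ)
    (hmd : ∀ i, 1 ≤ i → μ[d i | ℱ (i - 1)] =ᵐ[μ] 0) :
    Martingale (fun k ω => ∑ i ∈ Icc 1 k, d i ω) ℱ μ := by
  refine martingale_of_condExp_sub_eq_zero_nat (fun k => ?_) (fun k => ?_) (fun k => ?_)
  · refine Finset.stronglyMeasurable_fun_sum _ fun i hi => ?_
    exact (hadp i (mem_Icc.1 hi).1).mono (ℱ.mono (mem_Icc.1 hi).2)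
  · exact integrable_finsetSum _ fun i hi => hint i (mem_Icc.1 hi).1
  · have hdiff : (fun ω => ∑ i ∈ Icc 1 (k + 1), d i ω) - (fun ω => ∑ i ∈ Icc 1 k, d i ω)
        = d (k + 1) := by
      ext ω
      simp [sum_Icc_succ_top (Nat.le_add_left 1 k)]
    simpa [hdiff] using hmd (k + 1) (Nat.le_add_left 1 k)

theorem MeasureTheory.Martingale.submartingale_norm_rpow {ι : Type*} [Preorder ι]
    {ℱ : Filtration ι m0} {f : ι → Ω → E} (hf : Martingale f ℱ μ) {p : ℝ} (hp : 1 ≤ p)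
    (hint : ∀ i, Integrable (fun ω => ‖f i ω‖ ^ p) μ) :
    Submartingale (fun i ω => ‖f i ω‖ ^ p) ℱ μ := by
  refine ⟨fun i => ((hf.stronglyMeasurable i).norm.measurable.pow_const p).stronglyMeasurable,
    fun i j hij => ?_, hint⟩
  filter_upwards [hf.condExp_ae_eq hij, Integrable.norm_condExp_rpow_le (m := ℱ i) hp (hint j)]
    with ω hω hle
  rwa [hω] at hle

end Martingale

section Chow

variable {Ω : Type*} {m0 : MeasurableSpace Ω} {μ : Measure Ω} {ℱ : Filtration ℕ m0}
  {X : ℕ → Ω → ℝ} {c : ℕ → ℝ}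

def exceedEvent (c : ℕ → ℝ) (X : ℕ → Ω → ℝ) (ε : ℝ) (n N : ℕ) : Set Ω :=
  {ω | ∃ m, n ≤ m ∧ m ≤ N ∧ ε < c m * X m ω}

theorem exceedEvent_self (ε : ℝ) (n : ℕ) :
    exceedEvent c X ε n n = {ω | ε < c n * X n ω} := by
  ext ω
  constructor
  · rintro ⟨m, hnm, hmn, hω⟩
    rwa [le_antisymm hmn hnm] at hω
  · exact fun hω => ⟨n, le_rfl, le_rfl, hω⟩

theorem exceedEvent_succ (ε : ℝ) {n N : ℕ} (hnN : n ≤ N) :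
    exceedEvent c X ε n (N + 1) = exceedEvent c X ε n N ∪ {ω | ε < c (N + 1) * X (N + 1) ω} := by
  ext ω
  constructor
  · rintro ⟨m, hnm, hmN, hω⟩
    rcases Nat.lt_or_ge m (N + 1) with hm | hm
    · exact Or.inl ⟨m, hnm, Nat.le_of_lt_succ hm, hω⟩
    · rw [le_antisymm hmN hm] at hω
      exact Or.inr hω
  · rintro (⟨m, hnm, hmN, hω⟩ | hω)
    · exact ⟨m, hnm, hmN.trans N.le_succ, hω⟩
    · exact ⟨N + 1, hnN.trans N.le_succ, le_rfl, hω⟩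

theorem measurableSet_exceedEvent (hX : StronglyAdapted ℱ X) (ε : ℝ) (n N : ℕ) :
    MeasurableSet[ℱ N] (exceedEvent c X ε n N) := by
  have : exceedEvent c X ε n N = ⋃ m, ⋃ (_ : n ≤ m ∧ m ≤ N), {ω | ε < c m * X m ω} := by
    ext ω
    simp [exceedEvent, and_assoc]
  rw [this]
  refine MeasurableSet.iUnion fun m => MeasurableSet.iUnion fun hm => ℱ.mono hm.2 _ ?_
  exact measurableSet_lt measurable_const ((hX m).measurable.const_mul (c m))

variable [IsFiniteMeasure μ]

theorem mul_measureReal_le_setIntegral {ε : ℝ} {m : ℕ} {s : Set Ω} (hs : MeasurableSet s)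
    (hsub : s ⊆ {ω | ε < c m * X m ω}) (hint : Integrable (X m) μ) :
    ε * μ.real s ≤ c m * ∫ ω in s, X m ω ∂μ := by
  rw [← integral_const_mul]
  exact setIntegral_ge_of_const_le_real hs (measure_ne_top μ s) (fun ω hω => (hsub hω).le)
    (hint.const_mul (c m)).integrableOn

theorem MeasureTheory.Submartingale.chow_maximal_ineq_setIntegral (hX : Submartingale X ℱ μ)
    (hc_nonneg : ∀ k, 0 ≤ c k) (ε : ℝ) {n N : ℕ} (hnN : n ≤ N) :
    ε * μ.real (exceedEvent c X ε n N) ≤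
      c N * ∫ ω in exceedEvent c X ε n N, X N ω ∂μ +
        ∑ j ∈ Ico n N, (c j - c (j + 1)) * ∫ ω in exceedEvent c X ε n j, X j ω ∂μ := by
  induction N, hnN using Nat.le_induction with
  | base =>
    rw [exceedEvent_self, Ico_self, sum_empty, add_zero]
    exact mul_measureReal_le_setIntegral (measurableSet_lt measurable_const
      (((hX.stronglyMeasurable n).mono (ℱ.le n)).measurable.const_mul _)) subset_rfl
      (hX.integrable n)
  | succ N hnN ih =>
    set B := exceedEvent c X ε n N
    set F := {ω | ε < c (N + 1) * X (N + 1) ω} \ B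
    have hB : MeasurableSet[ℱ N] B := measurableSet_exceedEvent hX.stronglyAdapted ε n N
    have hF : MeasurableSet F := by
      refine (measurableSet_lt measurable_const ?_).diff (ℱ.le N _ hB)
      exact ((hX.stronglyMeasurable _).mono (ℱ.le _)).measurable.const_mul _
    have hBF : Disjoint B F := Set.disjoint_sdiff_right
    have hunion : exceedEvent c X ε n (N + 1) = B ∪ F := by
      rw [exceedEvent_succ ε hnN, Set.union_sdiff_self]
    have hF_le := mul_measureReal_le_setIntegral hF Set.sdiff_subset (hX.integrable (N + 1))
    have hmono : c (N + 1) * ∫ ω in B, X N ω ∂μ ≤ c (N + 1) * ∫ ω in B, X (N + 1) ω ∂μ :=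
      mul_le_mul_of_nonneg_left (hX.setIntegral_le N.le_succ hB) (hc_nonneg _)
    rw [hunion, measureReal_union hBF hF, setIntegral_union hBF hF
      (hX.integrable _).integrableOn (hX.integrable _).integrableOn,
      sum_Ico_succ_top hnN]
    linarith

theorem MeasureTheory.Submartingale.chow_maximal_ineq (hX : Submartingale X ℱ μ)
    (hX_nonneg : 0 ≤ X) (hc_nonneg : ∀ k, 0 ≤ c k) (hc_anti : Antitone c) (ε : ℝ) {n N : ℕ}
    (hnN : n ≤ N) :
    ε * μ.real (exceedEvent c X ε n N) ≤
      c N * ∫ ω, X N ω ∂μ + ∑ j ∈ Ico n N, (c j - c (j + 1)) * ∫ ω, X j ω ∂μ := by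
  have hset : ∀ k (s : Set Ω), ∫ ω in s, X k ω ∂μ ≤ ∫ ω, X k ω ∂μ := fun k s =>
    setIntegral_le_integral (hX.integrable k) (Filter.Eventually.of_forall (hX_nonneg k))
  refine (hX.chow_maximal_ineq_setIntegral hc_nonneg ε hnN).trans ?_
  refine add_le_add (mul_le_mul_of_nonneg_left (hset N _) (hc_nonneg N))
    (sum_le_sum fun j _ => mul_le_mul_of_nonneg_left (hset j _) ?_)
  exact sub_nonneg.2 (hc_anti (Nat.le_succ j))

end Chow

section Array

variable {Ω : Type*} (D : ℕ → ℕ → Ω → ℝ)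

theorem arrS_eq_sum_max (n k : ℕ) (ω : Ω) :
    arrS D n k ω = ∑ i ∈ Icc 1 k, D (max n i) i ω := by
  unfold arrS arrM
  split_ifs with hkn
  · exact sum_congr rfl fun i hi => by rw [max_eq_left ((mem_Icc.1 hi).2.trans hkn)]
  · have hsplit := sum_Ioc_consecutive (fun i => D (max n i) i ω) n.zero_le (le_of_not_ge hkn)
    simp only [← Icc_add_one_left_eq_Ioc, zero_add] at hsplit
    rw [← hsplit]
    congr 1
    · exact sum_congr rfl fun i hi => by rw [max_eq_left (mem_Icc.1 hi).2]
    · exact sum_congr rfl fun i hi => by rw [max_eq_right (Nat.le_of_succ_le (mem_Icc.1 hi).1)]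

theorem arrS_succ (n k : ℕ) (ω : Ω) :
    arrS D n (k + 1) ω = arrS D n k ω + D (max n (k + 1)) (k + 1) ω := by
  rw [arrS_eq_sum_max, arrS_eq_sum_max, sum_Icc_succ_top (Nat.le_add_left 1 k)]

theorem arrM_self_succ (m : ℕ) (ω : Ω) :
    arrM D (m + 1) (m + 1) ω = arrM D m m ω + D (m + 1) (m + 1) ω + arrR D (m + 1) ω := by
  simp only [arrM, arrR, Nat.add_sub_cancel, sum_Icc_succ_top (Nat.le_add_left 1 m),
    sum_sub_distrib]
  ring

theorem arrM_self_eq_arrS_add_sum_arrR {n m : ℕ} (hnm : n ≤ m) (ω : Ω) :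
    arrM D m m ω = arrS D n m ω + ∑ j ∈ Ioc n m, arrR D j ω := by
  induction m, hnm using Nat.le_induction with
  | base => simp [arrS]
  | succ m hnm ih =>
    rw [arrM_self_succ, ih, arrS_succ, max_eq_right (hnm.trans m.le_succ),
      sum_Ioc_succ_top hnm]
    ring

variable {D} {c : ℕ → ℝ}

theorem half_lt_arrS_or_half_lt_arrR_of_lt_arrM (hc_nonneg : ∀ k, 0 ≤ c k) (hc_anti : Antitone c)
    {lam : ℝ} {n m N : ℕ} (hnm : n ≤ m) (hmN : m ≤ N) {ω : Ω}
    (h : lam < c m * |arrM D m m ω|) :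
    lam / 2 < c m * |arrS D n m ω| ∨
      lam / 2 < ∑ j ∈ Icc (n + 1) N, c j * |arrR D j ω| := by
  have hM : c m * |arrM D m m ω| ≤ c m * |arrS D n m ω| + ∑ j ∈ Ioc n m, c m * |arrR D j ω| := by
    rw [arrM_self_eq_arrS_add_sum_arrR D hnm, ← mul_sum, ← mul_add]
    exact mul_le_mul_of_nonneg_left ((abs_add_le _ _).trans
      (add_le_add_right (abs_sum_le_sum_abs _ _) _)) (hc_nonneg m)
  have hR : ∑ j ∈ Ioc n m, c m * |arrR D j ω| ≤ ∑ j ∈ Icc (n + 1) N, c j * |arrR D j ω| := by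
    rw [← Icc_add_one_left_eq_Ioc]
    refine (sum_le_sum fun j hj => ?_).trans (sum_le_sum_of_subset_of_nonneg
      (Icc_subset_Icc le_rfl hmN) fun j _ _ => mul_nonneg (hc_nonneg j) (abs_nonneg _))
    exact mul_le_mul_of_nonneg_right (hc_anti (mem_Icc.1 hj).2) (abs_nonneg _)
  by_contra! hle
  linarith [hle.1, hle.2]

theorem setOf_lt_arrM_subset (hc_nonneg : ∀ k, 0 ≤ c k) (hc_anti : Antitone c) {lam p : ℝ}
    (hlam : 0 ≤ lam) (hp : 0 < p) (n N : ℕ) :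
    {ω | ∃ m, n ≤ m ∧ m ≤ N ∧ lam < c m * |arrM D m m ω|} ⊆
      exceedEvent (fun k => c k ^ p) (fun k ω => |arrS D n k ω| ^ p) ((lam / 2) ^ p) n N ∪
        {ω | (lam / 2) ^ p ≤ (∑ j ∈ Icc (n + 1) N, c j * |arrR D j ω|) ^ p} := by
  rintro ω ⟨m, hnm, hmN, hω⟩
  rcases half_lt_arrS_or_half_lt_arrR_of_lt_arrM hc_nonneg hc_anti hnm hmN hω with h | h
  · refine Or.inl ⟨m, hnm, hmN, ?_⟩
    rw [← Real.mul_rpow (hc_nonneg m) (abs_nonneg _)]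
    exact Real.rpow_lt_rpow (by positivity) h hp
  · exact Or.inr (Real.rpow_le_rpow (by positivity) h.le hp.le)

end Array

theorem martingale_arrS {Ω : Type*} {m0 : MeasurableSpace Ω} {μ : Measure Ω} [IsFiniteMeasure μ]
    {ℱ : Filtration ℕ m0} {D : ℕ → ℕ → Ω → ℝ}
    (hadp : ∀ n i, 1 ≤ i → i ≤ n → StronglyMeasurable[ℱ i] (D n i))
    (hint : ∀ n i, 1 ≤ i → i ≤ n → Integrable (D n i) μ)
    (hmd : ∀ n i, 1 ≤ i → i ≤ n → μ[D n i | ℱ (i - 1)] =ᵐ[μ] 0) (n : ℕ) :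
    Martingale (arrS D n) ℱ μ := by
  have hS : arrS D n = fun k ω => ∑ i ∈ Icc 1 k, D (max n i) i ω :=
    funext₂ (arrS_eq_sum_max D n)
  rw [hS]
  exact martingale_sum_Icc_of_condExp_eq_zero (fun i hi => hadp _ i hi (le_max_right n i))
    (fun i hi => hint _ i hi (le_max_right n i)) (fun i hi => hmd _ i hi (le_max_right n i))

theorem cbm_martingale_array_general
    {Ω : Type*} {m0 : MeasurableSpace Ω} {μ : Measure Ω} [IsProbabilityMeasure μ]
    {ℱ : Filtration ℕ m0} {D : ℕ → ℕ → Ω → ℝ}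
    (hadp : ∀ n i, 1 ≤ i → i ≤ n → StronglyMeasurable[ℱ i] (D n i))
    (hint : ∀ n i, 1 ≤ i → i ≤ n → Integrable (D n i) μ)
    (hmd : ∀ n i, 1 ≤ i → i ≤ n → μ[D n i | ℱ (i - 1)] =ᵐ[μ] 0)
    {c : ℕ → ℝ} (hc_pos : ∀ k, 0 < c k) (hc_mono : ∀ k l, k ≤ l → c l ≤ c k)
    {p : ℝ} (hp : 1 ≤ p) {lam : ℝ} (hlam : 0 < lam)
    {n N : ℕ} (hnN : n ≤ N)
    (hintS : ∀ k, Integrable (fun ω => |arrS D n k ω| ^ p) μ)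
    (hintR : Integrable
      (fun ω => (∑ j ∈ Finset.Icc (n + 1) N, c j * |arrR D j ω|) ^ p) μ) :
    2⁻¹ ^ p * lam ^ p *
        (μ {ω | ∃ m, n ≤ m ∧ m ≤ N ∧ lam < c m * |arrM D m m ω|}).toReal ≤
      c N ^ p * ∫ ω, |arrS D n N ω| ^ p ∂μ +
        ∑ j ∈ Finset.Ico n N, (c j ^ p - c (j + 1) ^ p) * ∫ ω, |arrS D n j ω| ^ p ∂μ +
        ∫ ω, (∑ j ∈ Finset.Icc (n + 1) N, c j * |arrR D j ω|) ^ p ∂μ := by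
  have hp0 : 0 < p := by linarith
  have hc_nonneg : ∀ k, 0 ≤ c k := fun k => (hc_pos k).le
  have hS : Submartingale (fun k ω => |arrS D n k ω| ^ p) ℱ μ := by
    simpa only [Real.norm_eq_abs] using (martingale_arrS hadp hint hmd n).submartingale_norm_rpow
      hp (by simpa only [Real.norm_eq_abs] using hintS)
  have hchow := hS.chow_maximal_ineq (fun k ω => by positivity)
    (fun k => Real.rpow_nonneg (hc_nonneg k) p)
    (fun k l hkl => Real.rpow_le_rpow (hc_nonneg l) (hc_mono k l hkl) hp0.le) ((lam / 2) ^ p) hnN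
  have hmarkov := mul_meas_ge_le_integral_of_nonneg
    (Filter.Eventually.of_forall fun ω => Real.rpow_nonneg
      (sum_nonneg fun j _ => mul_nonneg (hc_nonneg j) (abs_nonneg _)) p) hintR ((lam / 2) ^ p)
  have hsub := setOf_lt_arrM_subset (D := D) hc_nonneg hc_mono hlam.le hp0 n N
  calc 2⁻¹ ^ p * lam ^ p * (μ {ω | ∃ m, n ≤ m ∧ m ≤ N ∧ lam < c m * |arrM D m m ω|}).toReal
      = (lam / 2) ^ p * μ.real {ω | ∃ m, n ≤ m ∧ m ≤ N ∧ lam < c m * |arrM D m m ω|} := by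
        rw [← Real.mul_rpow (by norm_num) hlam.le, inv_mul_eq_div, measureReal_def]
    _ ≤ (lam / 2) ^ p * (μ.real (exceedEvent (fun k => c k ^ p)
          (fun k ω => |arrS D n k ω| ^ p) ((lam / 2) ^ p) n N) +
        μ.real {ω | (lam / 2) ^ p ≤ (∑ j ∈ Icc (n + 1) N, c j * |arrR D j ω|) ^ p}) :=
        mul_le_mul_of_nonneg_left ((measureReal_mono hsub).trans (measureReal_union_le _ _))
          (by positivity)
    _ ≤ _ := by linarith

/-- Triangular array generalization of the Chow–Birnbaum–Marshall inequality. -/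
theorem cbm_martingale_array
    {Ω : Type*} {m0 : MeasurableSpace Ω} {μ : Measure Ω} [IsProbabilityMeasure μ]
    {ℱ : Filtration ℕ m0} {D : ℕ → ℕ → Ω → ℝ}
    (hadp : ∀ n i, 1 ≤ i → i ≤ n → StronglyMeasurable[ℱ i] (D n i))
    (hint : ∀ n i, 1 ≤ i → i ≤ n → Integrable (D n i) μ)
    (hmd : ∀ n i, 1 ≤ i → i ≤ n → μ[D n i | ℱ (i - 1)] =ᵐ[μ] 0)
    {c : ℕ → ℝ} (hc_pos : ∀ k, 0 < c k) (hc_mono : ∀ k l, k ≤ l → c l ≤ c k)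
    {p : ℝ} (hp : 1 ≤ p) {lam : ℝ} (hlam : 0 < lam)
    {n N : ℕ} (hn : 1 ≤ n) (hnN : n ≤ N)
    (hintS : ∀ k, Integrable (fun ω => |arrS D n k ω| ^ p) μ)
    (hintR : Integrable
      (fun ω => (∑ j ∈ Finset.Icc (n + 1) N, c j * |arrR D j ω|) ^ p) μ) :
    2⁻¹ ^ p * lam ^ p *
        (μ {ω | ∃ m, n ≤ m ∧ m ≤ N ∧ lam < c m * |arrM D m m ω|}).toReal ≤
      c N ^ p * ∫ ω, |arrS D n N ω| ^ p ∂μ +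
        ∑ j ∈ Finset.Ico n N, (c j ^ p - c (j + 1) ^ p) * ∫ ω, |arrS D n j ω| ^ p ∂μ +
        ∫ ω, (∑ j ∈ Finset.Icc (n + 1) N, c j * |arrR D j ω|) ^ p ∂μ :=
  cbm_martingale_array_general hadp hint hmd hc_pos hc_mono hp hlam hnN hintS hintR
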